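/- Let Γ be a strictly Deza graph with parameters (n, k, b, a) with k = b + 1 and β(v) > 1 for every vertex v. (1) If v is a vertex of type (B) and u ∈ B(v), then B[u] = B[v] and u is of type (B). (2) If v is a vertex of type (C) and u ∈ B(v), then B[u] = B[v] and u is of type (C). -/

import Mathlib

/-!
Because `k = b + 1`, two adjacent vertices with `b` common neighbours are closed twins
(`N[x] = N[v]`), so they have equally many common neighbours with every third vertex.
Counting paths of length two from `x` gives `k² = k + b β(x) + a (n - 1 - β(x))`, so `β` is
constant when `a < b`; hence `B[u] = B[v]` for `u ∈ B(v)` as soon as any two vertices of `B[v]`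
have `b` common neighbours. For type (B) this holds because every vertex of `B(v)` is a twin of
`v`. For type (C), let `p` be the twin of `v` in `B(v)` and `S = N(v) \ {p}`: each `u ∈ B(v)` not
adjacent to `v` has `S ⊆ N(u)`, so two such vertices share the `b` vertices of `S`. Writing
`N(u) = S ∪ {y}`, the vertex `y` is adjacent to all of `S`, hence lies in `B(v) ⊆ B[u]`; as `S`
misses `B[v] = B[u]`, `y` is the only vertex of `B(u) ∩ N(u)` (for `u = p` the same holds with
`y = v`).
-/

open Finset SimpleGraph

universe u v

/-- The number of common neighbours of two vertices. -/
def commonNbrs {V : Type u} [Fintype V] [DecidableEq V] (G : SimpleGraph V)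
    [DecidableRel G.Adj] (x y : V) : ℕ :=
  (G.neighborFinset x ∩ G.neighborFinset y).card

/-- `G` is a Deza graph with parameters `(n, k, b, a)`: a nonempty `k`-regular graph on `n`
vertices in which any two distinct vertices have either `b` or `a` common neighbours,
where `b ≥ a`. -/
def IsDezaGraph {V : Type u} [Fintype V] [DecidableEq V] (G : SimpleGraph V)
    [DecidableRel G.Adj] (n k b a : ℕ) : Prop :=
  G ≠ ⊥ ∧ Fintype.card V = n ∧ G.IsRegularOfDegree k ∧ a ≤ b ∧
    ∀ x y : V, x ≠ y → commonNbrs G x y = b ∨ commonNbrs G x y = a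

/-- `G` is a strictly Deza graph with parameters `(n, k, b, a)`: a Deza graph of
diameter 2 that is not strongly regular. -/
def IsStrictlyDezaGraph {V : Type u} [Fintype V] [DecidableEq V] (G : SimpleGraph V)
    [DecidableRel G.Adj] (n k b a : ℕ) : Prop :=
  IsDezaGraph G n k b a ∧ G.Connected ∧ (∀ x y : V, G.dist x y ≤ 2) ∧
    (∃ x y : V, G.dist x y = 2) ∧ ¬ ∃ ℓ μ : ℕ, G.IsSRGWith n k ℓ μ

/-- `B(v)`: the set of vertices `u ≠ v` having exactly `b` common neighbours with `v`. -/
def dezaB {V : Type u} [Fintype V] [DecidableEq V] (G : SimpleGraph V)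
    [DecidableRel G.Adj] (b : ℕ) (v : V) : Finset V :=
  univ.filter fun u => u ≠ v ∧ commonNbrs G u v = b

/-- `A(v)`: the set of vertices `u ≠ v` having exactly `a` common neighbours with `v`. -/
def dezaA {V : Type u} [Fintype V] [DecidableEq V] (G : SimpleGraph V)
    [DecidableRel G.Adj] (a : ℕ) (v : V) : Finset V :=
  univ.filter fun u => u ≠ v ∧ commonNbrs G u v = a

/-- `B[v] = B(v) ∪ {v}`. -/
def dezaBc {V : Type u} [Fintype V] [DecidableEq V] (G : SimpleGraph V)
    [DecidableRel G.Adj] (b : ℕ) (v : V) : Finset V :=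
  insert v (dezaB G b v)

/-- A vertex `v` is of type (A) if `B(v) ∩ N(v) = ∅`. -/
def IsTypeA {V : Type u} [Fintype V] [DecidableEq V] (G : SimpleGraph V)
    [DecidableRel G.Adj] (b : ℕ) (v : V) : Prop :=
  dezaB G b v ∩ G.neighborFinset v = ∅

/-- A vertex `v` is of type (B) if `B(v) ⊆ N(v)`. -/
def IsTypeB {V : Type u} [Fintype V] [DecidableEq V] (G : SimpleGraph V)
    [DecidableRel G.Adj] (b : ℕ) (v : V) : Prop :=
  dezaB G b v ⊆ G.neighborFinset v

/-- A vertex `v` is of type (C) if `|B(v) ∩ N(v)| = 1`. -/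
def IsTypeC {V : Type u} [Fintype V] [DecidableEq V] (G : SimpleGraph V)
    [DecidableRel G.Adj] (b : ℕ) (v : V) : Prop :=
  (dezaB G b v ∩ G.neighborFinset v).card = 1

/-- A vertex `x` of type (A) is of type (A1) if there exists `y ∈ N(x)` with
`N(x) \ N(xᵢ) = {y}` for every `xᵢ ∈ B(x)`. -/
def IsTypeA1 {V : Type u} [Fintype V] [DecidableEq V] (G : SimpleGraph V)
    [DecidableRel G.Adj] (b : ℕ) (x : V) : Prop :=
  IsTypeA G b x ∧ ∃ y ∈ G.neighborFinset x,
    ∀ xi ∈ dezaB G b x, G.neighborFinset x \ G.neighborFinset xi = {y}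

/-- A vertex `x` of type (A) is of type (A2) if there exists `z ∉ N[x]` with
`N(xᵢ) \ N(x) = {z}` for every `xᵢ ∈ B(x)`. -/
def IsTypeA2 {V : Type u} [Fintype V] [DecidableEq V] (G : SimpleGraph V)
    [DecidableRel G.Adj] (b : ℕ) (x : V) : Prop :=
  IsTypeA G b x ∧ ∃ z ∉ insert x (G.neighborFinset x),
    ∀ xi ∈ dezaB G b x, G.neighborFinset xi \ G.neighborFinset x = {z}

/-- The complete multipartite graph with `m` parts of size `t`. -/
def completeMultipartiteGr (m t : ℕ) : SimpleGraph (Fin m × Fin t) where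
  Adj u v := u.1 ≠ v.1
  symm := ⟨fun _ _ h => Ne.symm h⟩
  loopless := ⟨fun _ h => h rfl⟩

/-- The 2-clique extension of a graph `H`: vertices `(u, i)` and `(v, j)` are adjacent
iff `u ~ v` in `H`, or `u = v` and `i ≠ j`. -/
def cliqueExt2 {W : Type v} (H : SimpleGraph W) : SimpleGraph (W × Fin 2) where
  Adj u v := H.Adj u.1 v.1 ∨ (u.1 = v.1 ∧ u.2 ≠ v.2)
  symm := by
    constructor
    intro u v h
    rcases h with h | ⟨h1, h2⟩
    · exact Or.inl h.symm
    · exact Or.inr ⟨h1.symm, h2.symm⟩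
  loopless := by
    constructor
    intro u h
    rcases h with h | ⟨_, h2⟩
    · exact H.loopless.irrefl _ h
    · exact h2 rfl

section

variable {V : Type u} [Fintype V] [DecidableEq V] {G : SimpleGraph V} [DecidableRel G.Adj]
  {n k b a : ℕ}

theorem commonNbrs_comm (x y : V) : commonNbrs G x y = commonNbrs G y x := by
  rw [commonNbrs, commonNbrs, inter_comm]

theorem card_commonNeighbors (x y : V) :
    Fintype.card (G.commonNeighbors x y) = commonNbrs G x y := by
  rw [commonNbrs, ← Set.toFinset_card]
  congr 1
  ext w
  rw [Set.mem_toFinset]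
  simp [SimpleGraph.commonNeighbors]

@[simp] theorem mem_dezaB {u v : V} : u ∈ dezaB G b v ↔ u ≠ v ∧ commonNbrs G u v = b := by
  simp [dezaB]

theorem mem_dezaB_comm {u v : V} : u ∈ dezaB G b v ↔ v ∈ dezaB G b u := by
  rw [mem_dezaB, mem_dezaB, commonNbrs_comm, ne_comm]

theorem dezaB_subset_dezaBc (b : ℕ) (v : V) : dezaB G b v ⊆ dezaBc G b v :=
  subset_insert _ _

theorem card_neighborFinset_erase (hreg : G.IsRegularOfDegree k) {v w : V}
    (hw : w ∈ G.neighborFinset v) : #((G.neighborFinset v).erase w) = k - 1 := by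
  rw [card_erase_of_mem hw, card_neighborFinset_eq_degree, hreg v]

theorem sum_commonNbrs (hreg : G.IsRegularOfDegree k) (x : V) :
    ∑ w, commonNbrs G x w = k * k := by
  calc ∑ w, commonNbrs G x w
      = ∑ w, ∑ y ∈ G.neighborFinset x, if G.Adj w y then 1 else 0 := by
        refine sum_congr rfl fun w _ => ?_
        rw [sum_boole, commonNbrs, Nat.cast_id, ← filter_mem_eq_inter]
        simp
    _ = ∑ y ∈ G.neighborFinset x, ∑ w, if G.Adj w y then 1 else 0 := sum_comm
    _ = ∑ y ∈ G.neighborFinset x, k := by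
        refine sum_congr rfl fun y _ => ?_
        rw [sum_boole, Nat.cast_id, ← hreg y, ← card_neighborFinset_eq_degree,
          neighborFinset_eq_filter]
        simp [adj_comm]
    _ = k * k := by rw [sum_const, card_neighborFinset_eq_degree, hreg x, smul_eq_mul]

namespace IsDezaGraph

theorem isRegularOfDegree (hG : IsDezaGraph G n k b a) : G.IsRegularOfDegree k := hG.2.2.1

theorem commonNbrs_eq_of_le (hG : IsDezaGraph G n k b a) {x y : V} (hxy : x ≠ y)
    (h : b ≤ commonNbrs G x y) : commonNbrs G x y = b := by
  rcases hG.2.2.2.2 x y hxy with h' | h' <;> grind [hG.2.2.2.1]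

theorem commonNbrs_eq_of_notMem_dezaB (hG : IsDezaGraph G n k b a) {x y : V} (hxy : x ≠ y)
    (h : x ∉ dezaB G b y) : commonNbrs G x y = a :=
  (hG.2.2.2.2 x y hxy).resolve_left fun hb => h (mem_dezaB.2 ⟨hxy, hb⟩)

theorem param_eq (hG : IsDezaGraph G n k b a) (x : V) :
    k * k + a * #(dezaB G b x) = k + b * #(dezaB G b x) + a * (n - 1) := by
  have hB : (univ.erase x).filter (fun w => commonNbrs G w x = b) = dezaB G b x := by
    ext w
    simp [dezaB]
  have hsumB : ∑ w ∈ dezaB G b x, commonNbrs G x w = #(dezaB G b x) * b :=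
    sum_const_nat fun w hw => by rw [commonNbrs_comm, (mem_dezaB.1 hw).2]
  have hsumA : ∑ w ∈ (univ.erase x).filter (fun w => ¬commonNbrs G w x = b), commonNbrs G x w
      = #((univ.erase x).filter (fun w => ¬commonNbrs G w x = b)) * a := by
    refine sum_const_nat fun w hw => ?_
    obtain ⟨hwx, hwb⟩ := mem_filter.1 hw
    rw [commonNbrs_comm, hG.commonNbrs_eq_of_notMem_dezaB (ne_of_mem_erase hwx)]
    exact fun h => hwb (mem_dezaB.1 h).2
  have hcard := card_filter_add_card_filter_not
    (s := univ.erase x) (fun w => commonNbrs G w x = b)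
  have hsum := sum_commonNbrs hG.isRegularOfDegree x
  rw [← add_sum_erase _ _ (mem_univ x), ← sum_filter_add_sum_filter_not _
    (fun w => commonNbrs G w x = b), hB, hsumB, hsumA] at hsum
  rw [hB, card_erase_of_mem (mem_univ x), card_univ, hG.2.1] at hcard
  have hxx : commonNbrs G x x = k := by
    rw [commonNbrs, inter_self, card_neighborFinset_eq_degree, hG.isRegularOfDegree x]
  rw [hxx] at hsum
  rw [← hcard]
  nlinarith

theorem card_dezaB_eq (hG : IsDezaGraph G n k b a) (hab : a < b) (x y : V) :
    #(dezaB G b x) = #(dezaB G b y) := by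
  have hx := hG.param_eq x
  have hy := hG.param_eq y
  rcases lt_trichotomy #(dezaB G b x) #(dezaB G b y) with h | h | h
  · nlinarith
  · exact h
  · nlinarith

end IsDezaGraph

theorem IsStrictlyDezaGraph.lt (hG : IsStrictlyDezaGraph G n k b a) : a < b := by
  obtain ⟨⟨-, hcard, hreg, hab, hdich⟩, -, -, -, hnsrg⟩ := hG
  refine hab.lt_of_ne fun hba => hnsrg ⟨b, b, ?_⟩
  have h (x y : V) (hxy : x ≠ y) : Fintype.card (G.commonNeighbors x y) = b := by
    rw [card_commonNeighbors]
    rcases hdich x y hxy with h | h <;> omega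
  exact ⟨hcard, hreg, fun x y hxy => h x y hxy.ne, fun x y hxy _ => h x y hxy⟩

section Twins

variable (hreg : G.IsRegularOfDegree (b + 1))
include hreg

theorem neighborFinset_erase_eq_inter {x v : V} (hadj : G.Adj x v)
    (hxv : commonNbrs G x v = b) :
    (G.neighborFinset x).erase v = G.neighborFinset x ∩ G.neighborFinset v := by
  refine (eq_of_subset_of_card_le
    (fun w hw => mem_erase.2 ⟨?_, mem_of_mem_inter_left hw⟩) ?_).symm
  · rintro rfl
    exact G.notMem_neighborFinset_self _ (mem_of_mem_inter_right hw)
  · rw [card_neighborFinset_erase hreg (G.mem_neighborFinset _ _ |>.2 hadj)]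
    exact (Nat.add_sub_cancel b 1).trans_le hxv.ge

theorem neighborFinset_erase_eq_erase {x v : V} (hadj : G.Adj x v)
    (hxv : commonNbrs G x v = b) :
    (G.neighborFinset x).erase v = (G.neighborFinset v).erase x := by
  rw [neighborFinset_erase_eq_inter hreg hadj hxv,
    neighborFinset_erase_eq_inter hreg hadj.symm ((commonNbrs_comm _ _).trans hxv), inter_comm]

theorem commonNbrs_eq_of_twin {x v w : V} (hadj : G.Adj x v) (hxv : commonNbrs G x v = b)
    (hwx : w ≠ x) (hwv : w ≠ v) : commonNbrs G x w = commonNbrs G v w := by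
  set T := (G.neighborFinset x).erase v
  have hTv : T = (G.neighborFinset v).erase x := neighborFinset_erase_eq_erase hreg hadj hxv
  have hNx : G.neighborFinset x = insert v T :=
    (insert_erase ((G.mem_neighborFinset _ _).2 hadj)).symm
  have hNv : G.neighborFinset v = insert x T := by
    rw [hTv, insert_erase ((G.mem_neighborFinset _ _).2 hadj.symm)]
  have hvT : v ∉ T := notMem_erase v _
  have hxT : x ∉ T := hTv ▸ notMem_erase x _
  rw [commonNbrs, commonNbrs, hNx, hNv]
  by_cases hw : w ∈ T
  · have hvw : v ∈ G.neighborFinset w := by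
      rw [mem_neighborFinset, adj_comm, ← mem_neighborFinset, hNv]; exact mem_insert_of_mem hw
    have hxw : x ∈ G.neighborFinset w := by
      rw [mem_neighborFinset, adj_comm, ← mem_neighborFinset, hNx]; exact mem_insert_of_mem hw
    rw [insert_inter_of_mem hvw, insert_inter_of_mem hxw,
      card_insert_of_notMem fun h => hvT (mem_of_mem_inter_left h),
      card_insert_of_notMem fun h => hxT (mem_of_mem_inter_left h)]
  · have hvw : v ∉ G.neighborFinset w := by
      rw [mem_neighborFinset, adj_comm, ← mem_neighborFinset, hNv]; simp [hwx, hw]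
    have hxw : x ∉ G.neighborFinset w := by
      rw [mem_neighborFinset, adj_comm, ← mem_neighborFinset, hNx]; simp [hwv, hw]
    rw [insert_inter_of_notMem hvw, insert_inter_of_notMem hxw]

theorem pairwise_dezaBc {v : V}
    (h : ∀ t ∈ dezaB G b v, ∀ s ∈ dezaB G b v, ¬G.Adj t v → ¬G.Adj s v → t ≠ s →
      commonNbrs G t s = b) :
    (dezaBc G b v : Set V).Pairwise fun t s => commonNbrs G t s = b := by
  intro t ht s hs hts
  rcases mem_insert.1 ht with rfl | htB <;> rcases mem_insert.1 hs with rfl | hsB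
  · exact absurd rfl hts
  · rw [commonNbrs_comm]; exact (mem_dezaB.1 hsB).2
  · exact (mem_dezaB.1 htB).2
  obtain ⟨htv, htb⟩ := mem_dezaB.1 htB
  obtain ⟨hsv, hsb⟩ := mem_dezaB.1 hsB
  by_cases hta : G.Adj t v
  · rw [commonNbrs_eq_of_twin hreg hta htb hts.symm hsv, commonNbrs_comm, hsb]
  by_cases hsa : G.Adj s v
  · rw [commonNbrs_comm, commonNbrs_eq_of_twin hreg hsa hsb hts htv, commonNbrs_comm, htb]
  exact h t htB s hsB hta hsa hts

theorem pairwise_dezaBc_of_isTypeB {v : V} (hv : IsTypeB G b v) :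
    (dezaBc G b v : Set V).Pairwise fun t s => commonNbrs G t s = b :=
  pairwise_dezaBc hreg fun _ ht _ _ hta _ _ =>
    absurd ((G.mem_neighborFinset _ _).1 (hv ht)).symm hta

theorem isTypeB_of_dezaBc_eq {u v : V} (hv : IsTypeB G b v) (hu : u ∈ dezaB G b v)
    (hBc : dezaBc G b u = dezaBc G b v) : IsTypeB G b u := by
  intro t ht
  have huv : G.Adj u v := ((G.mem_neighborFinset _ _).1 (hv hu)).symm
  rcases mem_insert.1 (hBc ▸ dezaB_subset_dezaBc _ _ ht) with rfl | htB
  · exact (G.mem_neighborFinset _ _).2 huv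
  · have htN : t ∈ (G.neighborFinset v).erase u := mem_erase.2 ⟨(mem_dezaB.1 ht).1, hv htB⟩
    rw [← neighborFinset_erase_eq_erase hreg huv (mem_dezaB.1 hu).2] at htN
    exact mem_of_mem_erase htN

end Twins

theorem dezaBc_eq_of_pairwise {u v : V}
    (hpair : (dezaBc G b v : Set V).Pairwise fun t s => commonNbrs G t s = b)
    (hcard : #(dezaB G b u) = #(dezaB G b v)) (hu : u ∈ dezaB G b v) :
    dezaBc G b u = dezaBc G b v := by
  refine (eq_of_subset_of_card_le (fun t ht => ?_) ?_).symm
  · by_cases htu : t = u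
    · exact htu ▸ mem_insert_self _ _
    · exact dezaB_subset_dezaBc _ _
        (mem_dezaB.2 ⟨htu, hpair ht (dezaB_subset_dezaBc _ _ hu) htu⟩)
  · rw [dezaBc, dezaBc, card_insert_of_notMem, card_insert_of_notMem, hcard] <;> simp

theorem isTypeC_of_neighborFinset_eq_insert {u q : V} {S : Finset V}
    (hN : G.neighborFinset u = insert q S) (hq : q ∈ dezaB G b u)
    (hS : Disjoint (dezaB G b u) S) : IsTypeC G b u := by
  rw [IsTypeC, hN, inter_insert_of_mem hq, disjoint_iff_inter_eq_empty.1 hS, insert_empty,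
    card_singleton]

section TypeC

variable {v p : V} (hp : dezaB G b v ∩ G.neighborFinset v = {p})
include hp

theorem mem_dezaB_and_adj_of_inter_eq_singleton : p ∈ dezaB G b v ∧ G.Adj p v := by
  obtain ⟨hpB, hpN⟩ := mem_inter.1 (hp ▸ mem_singleton_self p)
  exact ⟨hpB, ((G.mem_neighborFinset _ _).1 hpN).symm⟩

theorem notMem_dezaBc_of_mem_erase {t : V} (ht : t ∈ (G.neighborFinset v).erase p) :
    t ∉ dezaBc G b v := by
  obtain ⟨htp, htN⟩ := mem_erase.1 ht
  rintro htB
  rcases mem_insert.1 htB with rfl | htB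
  · exact G.notMem_neighborFinset_self _ htN
  · exact htp (mem_singleton.1 (hp ▸ mem_inter.2 ⟨htB, htN⟩))

theorem disjoint_dezaB_erase {u : V} (hBc : dezaBc G b u = dezaBc G b v) :
    Disjoint (dezaB G b u) ((G.neighborFinset v).erase p) :=
  disjoint_left.2 fun _ htB htS =>
    notMem_dezaBc_of_mem_erase hp htS (hBc ▸ dezaB_subset_dezaBc _ _ htB)

theorem card_neighborFinset_erase_eq (hreg : G.IsRegularOfDegree (b + 1)) :
    #((G.neighborFinset v).erase p) = b := by
  rw [card_neighborFinset_erase hreg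
    ((G.mem_neighborFinset _ _).2 (mem_dezaB_and_adj_of_inter_eq_singleton hp).2.symm),
    Nat.add_sub_cancel]

theorem neighborFinset_eq_insert_erase (hreg : G.IsRegularOfDegree (b + 1)) :
    G.neighborFinset p = insert v ((G.neighborFinset v).erase p) := by
  obtain ⟨hpB, hpv⟩ := mem_dezaB_and_adj_of_inter_eq_singleton hp
  rw [← neighborFinset_erase_eq_erase hreg hpv (mem_dezaB.1 hpB).2,
    insert_erase ((G.mem_neighborFinset _ _).2 hpv)]

theorem erase_subset_neighborFinset (hreg : G.IsRegularOfDegree (b + 1)) {u : V}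
    (hu : u ∈ dezaB G b v) (hnadj : ¬G.Adj u v) :
    (G.neighborFinset v).erase p ⊆ G.neighborFinset u := by
  obtain ⟨hpB, hpv⟩ := mem_dezaB_and_adj_of_inter_eq_singleton hp
  obtain ⟨huv, hub⟩ := mem_dezaB.1 hu
  have hup : u ≠ p := by rintro rfl; exact hnadj hpv
  have hcard : #((G.neighborFinset v).erase p ∩ G.neighborFinset u)
      = #((G.neighborFinset v).erase p) := by
    rw [card_neighborFinset_erase_eq hp hreg, ← hub, commonNbrs_comm,
      ← commonNbrs_eq_of_twin hreg hpv (mem_dezaB.1 hpB).2 hup huv, commonNbrs,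
      neighborFinset_eq_insert_erase hp hreg,
      insert_inter_of_notMem fun h => hnadj ((G.mem_neighborFinset _ _).1 h)]
  exact inter_eq_left.1 (eq_of_subset_of_card_le inter_subset_left hcard.ge)

variable (hG : IsDezaGraph G n (b + 1) b a)
include hG

theorem pairwise_dezaBc_of_inter_eq_singleton :
    (dezaBc G b v : Set V).Pairwise fun t s => commonNbrs G t s = b := by
  have hreg := hG.isRegularOfDegree
  refine pairwise_dezaBc hreg fun t ht s hs hta hsa hts => hG.commonNbrs_eq_of_le hts ?_
  calc b = #((G.neighborFinset v).erase p) := (card_neighborFinset_erase_eq hp hreg).symm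
    _ ≤ commonNbrs G t s := card_le_card <| subset_inter
        (erase_subset_neighborFinset hp hreg ht hta) (erase_subset_neighborFinset hp hreg hs hsa)

variable (hBc : ∀ w ∈ dezaB G b v, dezaBc G b w = dezaBc G b v)
include hBc

/- With `S = N(v) \ {p}`: a vertex `r ∈ S` lies outside `B[v]`, so it has `a` common neighbours
with both `p` and `u`; comparing `N(p) = {v} ∪ S` with `N(u) = {y} ∪ S` forces `r ~ y`. -/
theorem adj_of_neighborFinset_eq_insert {u y : V} (hu : u ∈ dezaB G b v) (hnadj : ¬G.Adj u v)
    (hNu : G.neighborFinset u = insert y ((G.neighborFinset v).erase p)) {r : V}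
    (hr : r ∈ (G.neighborFinset v).erase p) : G.Adj y r := by
  obtain ⟨hpB, hpv⟩ := mem_dezaB_and_adj_of_inter_eq_singleton hp
  have hrB := notMem_dezaBc_of_mem_erase hp hr
  obtain ⟨hrp, hrv⟩ := mem_erase.1 hr
  have hrv : G.Adj r v := ((G.mem_neighborFinset _ _).1 hrv).symm
  have hru : r ≠ u := by rintro rfl; exact hnadj hrv
  have hap := hG.commonNbrs_eq_of_notMem_dezaB hrp fun h =>
    hrB (hBc p hpB ▸ dezaB_subset_dezaBc _ _ h)
  have hau := hG.commonNbrs_eq_of_notMem_dezaB hru fun h =>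
    hrB (hBc u hu ▸ dezaB_subset_dezaBc _ _ h)
  by_contra hyr
  rw [commonNbrs, neighborFinset_eq_insert_erase hp hG.isRegularOfDegree,
    inter_insert_of_mem ((G.mem_neighborFinset _ _).2 hrv),
    card_insert_of_notMem fun h =>
      G.notMem_neighborFinset_self v (mem_of_mem_erase (mem_of_mem_inter_right h))] at hap
  rw [commonNbrs, hNu, inter_insert_of_notMem fun h => hyr ((G.mem_neighborFinset _ _).1 h).symm]
    at hau
  omega

theorem isTypeC_of_mem_dezaB {u : V} (hu : u ∈ dezaB G b v) : IsTypeC G b u := by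
  have hreg := hG.isRegularOfDegree
  have hdisj := disjoint_dezaB_erase hp (hBc u hu)
  by_cases hadj : G.Adj u v
  · obtain rfl : u = p :=
      mem_singleton.1 (hp ▸ mem_inter.2 ⟨hu, (G.mem_neighborFinset _ _).2 hadj.symm⟩)
    exact isTypeC_of_neighborFinset_eq_insert (neighborFinset_eq_insert_erase hp hreg)
      (mem_dezaB_comm.1 hu) hdisj
  have hSu := erase_subset_neighborFinset hp hreg hu hadj
  obtain ⟨y, -, hNu⟩ := exists_eq_insert_iff.2 ⟨hSu, by
    rw [card_neighborFinset_erase_eq hp hreg, card_neighborFinset_eq_degree, hreg u]⟩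
  have hyNu : y ∈ G.neighborFinset u := hNu ▸ mem_insert_self _ _
  have hyv : y ≠ v := by rintro rfl; exact hadj ((G.mem_neighborFinset _ _).1 hyNu)
  have hyB : y ∈ dezaB G b v := by
    refine mem_dezaB.2 ⟨hyv, hG.commonNbrs_eq_of_le hyv ?_⟩
    calc b = #((G.neighborFinset v).erase p) := (card_neighborFinset_erase_eq hp hreg).symm
      _ ≤ commonNbrs G y v := card_le_card <| subset_inter
          (fun r hr => (G.mem_neighborFinset _ _).2
            (adj_of_neighborFinset_eq_insert hp hG hBc hu hadj hNu.symm hr))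
          (erase_subset _ _)
  have hyu : y ≠ u := by rintro rfl; exact G.notMem_neighborFinset_self _ hyNu
  have hyBu : y ∈ dezaB G b u := by
    rcases mem_insert.1 (hBc u hu ▸ dezaB_subset_dezaBc _ _ hyB) with h | h
    · exact absurd h hyu
    · exact h
  exact isTypeC_of_neighborFinset_eq_insert hNu.symm hyBu hdisj

end TypeC

end

theorem stmt13_general {V : Type u} [Fintype V] [DecidableEq V] (G : SimpleGraph V)
    [DecidableRel G.Adj] (n k b a : ℕ)
    (hG : IsStrictlyDezaGraph G n k b a) (hk : k = b + 1) :
    (∀ x u : V, IsTypeB G b x → u ∈ dezaB G b x →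
      dezaBc G b u = dezaBc G b x ∧ IsTypeB G b u) ∧
    (∀ x u : V, IsTypeC G b x → u ∈ dezaB G b x →
      dezaBc G b u = dezaBc G b x ∧ IsTypeC G b u) := by
  subst hk
  have hD := hG.1
  have hcard := hD.card_dezaB_eq hG.lt
  refine ⟨fun x u hx hu => ?_, fun x u hx hu => ?_⟩
  · have hBc := dezaBc_eq_of_pairwise
      (pairwise_dezaBc_of_isTypeB hD.isRegularOfDegree hx) (hcard u x) hu
    exact ⟨hBc, isTypeB_of_dezaBc_eq hD.isRegularOfDegree hx hu hBc⟩
  · obtain ⟨p, hp⟩ := card_eq_one.1 hx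
    have hBc : ∀ w ∈ dezaB G b x, dezaBc G b w = dezaBc G b x := fun w hw =>
      dezaBc_eq_of_pairwise (pairwise_dezaBc_of_inter_eq_singleton hp hD) (hcard w x) hw
    exact ⟨hBc u hu, isTypeC_of_mem_dezaB hp hD hBc hu⟩

theorem stmt13 {V : Type u} [Fintype V] [DecidableEq V] (G : SimpleGraph V)
    [DecidableRel G.Adj] (n k b a : ℕ)
    (hG : IsStrictlyDezaGraph G n k b a) (hk : k = b + 1)
    (hβ : ∀ v : V, 1 < (dezaB G b v).card) :
    (∀ x u : V, IsTypeB G b x → u ∈ dezaB G b x →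
      dezaBc G b u = dezaBc G b x ∧ IsTypeB G b u) ∧
    (∀ x u : V, IsTypeC G b x → u ∈ dezaB G b x →
      dezaBc G b u = dezaBc G b x ∧ IsTypeC G b u) :=
  stmt13_general G n k b a hG hk
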